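/- Let σ, μ, λ > 0, z ∈ ℝ^ℓ, A : ℝ^n → ℝ^m continuous, D ∈ ℝ^{ℓ×n}, b ∈ ℝ^m. Assume f_joint is strictly convex and coercive on ℝ^n × ℝ^ℓ when μ = 0 (i.e., the function (x,y) ↦ (1/(2σ²))‖A(x) − b‖₂² + (λ²/2)‖Dx − y + z‖₂² is strictly convex and coercive). Then every local minimizer of f_proj is a global minimizer of f_proj. -/

import Mathlib

/-- Componentwise soft-thresholding (shrinkage) map
`(y_z(x))_i = sign((Dx+z)_i) · max(|(Dx+z)_i| − μ/λ², 0)`. -/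
noncomputable def softY {l n : ℕ} (μ lam : ℝ) (D : Matrix (Fin l) (Fin n) ℝ)
    (z : Fin l → ℝ) (x : Fin n → ℝ) : Fin l → ℝ :=
  fun i => Real.sign (D.mulVec x i + z i) * max (|D.mulVec x i + z i| - μ / lam ^ 2) 0

/-- `f_joint(x,y) = (1/(2σ²))‖A(x) − b‖₂² + (λ²/2)‖Dx − y + z‖₂² + μ‖y‖₁`. -/
noncomputable def fjoint {n m l : ℕ} (σ μ lam : ℝ) (A : (Fin n → ℝ) → Fin m → ℝ)
    (D : Matrix (Fin l) (Fin n) ℝ) (b : Fin m → ℝ) (z : Fin l → ℝ)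
    (x : Fin n → ℝ) (y : Fin l → ℝ) : ℝ :=
  1 / (2 * σ ^ 2) * ∑ i, (A x i - b i) ^ 2
    + lam ^ 2 / 2 * ∑ i, (D.mulVec x i - y i + z i) ^ 2
    + μ * ∑ i, |y i|

/-- The projected function `f_proj(x) = f_joint(x, y_z(x))`. -/
noncomputable def fproj {n m l : ℕ} (σ μ lam : ℝ) (A : (Fin n → ℝ) → Fin m → ℝ)
    (D : Matrix (Fin l) (Fin n) ℝ) (b : Fin m → ℝ) (z : Fin l → ℝ)
    (x : Fin n → ℝ) : ℝ :=
  fjoint σ μ lam A D b z x (softY μ lam D z x)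

/-- A function is coercive if `f(v) → ∞` as `‖v‖ → ∞`. -/
def Coercive {E : Type*} [Norm E] (f : E → ℝ) : Prop :=
  Filter.Tendsto f (Filter.comap norm Filter.atTop) Filter.atTop

/-- Soft thresholding minimizes `y ↦ (1/2)(c-y)² + t|y|`. -/
lemma soft_min (t : ℝ) (ht : 0 < t) (c y : ℝ) :
    (1/2) * (c - Real.sign c * max (|c| - t) 0) ^ 2
        + t * |Real.sign c * max (|c| - t) 0|
      ≤ (1/2) * (c - y) ^ 2 + t * |y| := by
  have hcy : c * y ≤ |c| * |y| := (le_abs_self _).trans (abs_mul c y).le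
  have hy : 0 ≤ |y| := abs_nonneg y
  rcases le_or_gt |c| t with h | h
  · rw [max_eq_right (by linarith)]
    simp only [mul_zero, sub_zero, abs_zero]
    nlinarith [abs_nonneg c, sq_nonneg y]
  · rw [max_eq_left (by linarith)]
    rcases lt_trichotomy c 0 with hc | hc | hc
    · rw [Real.sign_of_neg hc, abs_of_neg hc] at *
      have h1 : (-1 : ℝ) * (-c - t) = c + t := by ring
      rw [h1]
      have h2 : |c + t| = -(c + t) := abs_of_neg (by linarith)
      rw [h2]
      nlinarith [sq_nonneg (c + |y| + t), sq_abs y]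
    · simp [hc] at h; linarith
    · rw [Real.sign_of_pos hc, abs_of_pos hc] at *
      have h1 : (1 : ℝ) * (c - t) = c - t := by ring
      rw [h1]
      have h2 : |c - t| = c - t := abs_of_pos (by linarith)
      rw [h2]
      nlinarith [sq_nonneg (c - |y| - t), sq_abs y]

lemma term_le (μ lam : ℝ) (hμ : 0 < μ) (hlam : 0 < lam) (c y : ℝ) :
    lam ^ 2 / 2 * (c - Real.sign c * max (|c| - μ / lam ^ 2) 0) ^ 2
        + μ * |Real.sign c * max (|c| - μ / lam ^ 2) 0|
      ≤ lam ^ 2 / 2 * (c - y) ^ 2 + μ * |y| := by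
  have hl : (lam : ℝ) ^ 2 ≠ 0 := by positivity
  have key := soft_min (μ / lam ^ 2) (by positivity) c y
  set s := Real.sign c * max (|c| - μ / lam ^ 2) 0 with hs
  calc lam ^ 2 / 2 * (c - s) ^ 2 + μ * |s|
      = lam ^ 2 * ((1/2) * (c - s) ^ 2 + (μ / lam ^ 2) * |s|) := by
        field_simp
    _ ≤ lam ^ 2 * ((1/2) * (c - y) ^ 2 + (μ / lam ^ 2) * |y|) :=
        mul_le_mul_of_nonneg_left key (sq_nonneg lam)
    _ = lam ^ 2 / 2 * (c - y) ^ 2 + μ * |y| := by field_simp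

lemma fjoint_softY_le {n m l : ℕ} (σ μ lam : ℝ) (hμ : 0 < μ) (hlam : 0 < lam)
    (A : (Fin n → ℝ) → Fin m → ℝ) (D : Matrix (Fin l) (Fin n) ℝ) (b : Fin m → ℝ)
    (z : Fin l → ℝ) (x : Fin n → ℝ) (y : Fin l → ℝ) :
    fjoint σ μ lam A D b z x (softY μ lam D z x) ≤ fjoint σ μ lam A D b z x y := by
  unfold fjoint
  have h : ∀ w : Fin l → ℝ,
      lam ^ 2 / 2 * ∑ i, (D.mulVec x i - w i + z i) ^ 2 + μ * ∑ i, |w i|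
        = ∑ i, (lam ^ 2 / 2 * (D.mulVec x i - w i + z i) ^ 2 + μ * |w i|) := by
    intro w
    rw [Finset.mul_sum, Finset.mul_sum, ← Finset.sum_add_distrib]
  rw [add_assoc, add_assoc, h, h]
  refine add_le_add le_rfl (Finset.sum_le_sum fun i _ => ?_)
  simp only [softY]
  have e1 : ∀ S : ℝ, D.mulVec x i - S + z i = (D.mulVec x i + z i) - S := fun S => by ring
  rw [e1, e1]
  exact term_le μ lam hμ hlam (D.mulVec x i + z i) (y i)

/-- if `A` is continuous and the μ = 0 part of `f_joint` is strictly convex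
and coercive on ℝⁿ × ℝˡ, then every local minimizer of `f_proj` is a global minimizer. -/
theorem stmt_8 {n m l : ℕ} (σ μ lam : ℝ) (hσ : 0 < σ) (hμ : 0 < μ) (hlam : 0 < lam)
    (z : Fin l → ℝ) (A : (Fin n → ℝ) → Fin m → ℝ) (hA : Continuous A)
    (D : Matrix (Fin l) (Fin n) ℝ) (b : Fin m → ℝ)
    (hconv : StrictConvexOn ℝ Set.univ (fun p : (Fin n → ℝ) × (Fin l → ℝ) =>
      1 / (2 * σ ^ 2) * ∑ i, (A p.1 i - b i) ^ 2
        + lam ^ 2 / 2 * ∑ i, (D.mulVec p.1 i - p.2 i + z i) ^ 2))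
    (hcoer : Coercive (fun p : (Fin n → ℝ) × (Fin l → ℝ) =>
      1 / (2 * σ ^ 2) * ∑ i, (A p.1 i - b i) ^ 2
        + lam ^ 2 / 2 * ∑ i, (D.mulVec p.1 i - p.2 i + z i) ^ 2)) :
    ∀ xbar : Fin n → ℝ, IsLocalMin (fproj σ μ lam A D b z) xbar →
      ∀ x : Fin n → ℝ, fproj σ μ lam A D b z xbar ≤ fproj σ μ lam A D b z x := by
  -- joint convexity of fjoint
  have h2 : ConvexOn ℝ Set.univ
      (fun p : (Fin n → ℝ) × (Fin l → ℝ) => μ * ∑ i, |p.2 i|) := by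
    refine ⟨convex_univ, fun p _ q _ a c ha hc hac => ?_⟩
    simp only [smul_eq_mul]
    calc μ * ∑ i, |(a • p + c • q).2 i|
        ≤ μ * ∑ i, (a * |p.2 i| + c * |q.2 i|) := by
          refine mul_le_mul_of_nonneg_left (Finset.sum_le_sum fun i _ => ?_) hμ.le
          have : (a • p + c • q).2 i = a * p.2 i + c * q.2 i := rfl
          rw [this]
          calc |a * p.2 i + c * q.2 i| ≤ |a * p.2 i| + |c * q.2 i| := abs_add_le _ _
            _ = a * |p.2 i| + c * |q.2 i| := by
                rw [abs_mul, abs_mul, abs_of_nonneg ha, abs_of_nonneg hc]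
      _ = a * (μ * ∑ i, |p.2 i|) + c * (μ * ∑ i, |q.2 i|) := by
          rw [Finset.sum_add_distrib]
          rw [← Finset.mul_sum, ← Finset.mul_sum]
          ring
  have hjc : ConvexOn ℝ Set.univ
      (fun p : (Fin n → ℝ) × (Fin l → ℝ) => fjoint σ μ lam A D b z p.1 p.2) :=
    hconv.convexOn.add h2
  -- convexity of fproj
  have hpc : ConvexOn ℝ Set.univ (fproj σ μ lam A D b z) := by
    refine ⟨convex_univ, fun x _ x' _ a c ha hc hac => ?_⟩
    have step1 : fproj σ μ lam A D b z (a • x + c • x')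
        ≤ fjoint σ μ lam A D b z (a • x + c • x')
            (a • softY μ lam D z x + c • softY μ lam D z x') :=
      fjoint_softY_le σ μ lam hμ hlam A D b z _ _
    have step2 := hjc.2 (Set.mem_univ (x, softY μ lam D z x))
      (Set.mem_univ (x', softY μ lam D z x')) ha hc hac
    exact step1.trans step2
  intro xbar hloc x
  exact IsMinOn.of_isLocalMin_of_convex_univ hloc hpc x
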